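/- Under the block-balancing construction (as in the previous context), the string u of length n satisfies |R(u)_i| ≤ (3/2)√n for every i ∈ [n], where R(u)_i = 2·wt(u_1...u_i) − i is the running digital sum at position i. -/
import Mathlib


/-- Running digital sum of a block `x` of length `m`: `2·wt(x) − m`. -/
def Rb {m : ℕ} (x : Fin m → Bool) : ℤ :=
  2 * ((Finset.univ.filter (fun k : Fin m => x k = true)).card : ℤ) - m

/-- RDS of the concatenation of the first `j` blocks of `u`. -/
def Rpre {m : ℕ} (u : Fin m → Fin m → Bool) (j : ℕ) : ℤ :=
  ∑ k ∈ Finset.univ.filter (fun k : Fin m => (k : ℕ) < j), Rb (u k)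

/-- RDS at (bit) position `i` of the length-`m·m` string obtained by concatenating the
blocks `u 0, u 1, ..., u (m-1)`. -/
def RdsFlat {m : ℕ} (u : Fin m → Fin m → Bool) (i : ℕ) : ℤ :=
  2 * ((Finset.univ.filter
    (fun p : Fin m × Fin m => (p.1 : ℕ) * m + (p.2 : ℕ) < i ∧ u p.1 p.2 = true)).card : ℤ) - i

open Finset

def wt {m : ℕ} (x : Fin m → Bool) : ℕ := (univ.filter (fun k : Fin m => x k = true)).card

def pw {m : ℕ} (x : Fin m → Bool) (r : ℕ) : ℕ :=
  (univ.filter (fun k : Fin m => (k : ℕ) < r ∧ x k = true)).card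

lemma wt_le {m : ℕ} (x : Fin m → Bool) : wt x ≤ m := by
  simpa [wt] using card_filter_le (univ : Finset (Fin m)) _

lemma abs_Rb_le {m : ℕ} (x : Fin m → Bool) : |Rb x| ≤ (m : ℤ) := by
  have h : (wt x : ℤ) ≤ m := by exact_mod_cast wt_le x
  have h0 : (0:ℤ) ≤ (wt x : ℤ) := by positivity
  rw [abs_le]
  unfold Rb
  constructor <;> [linarith [show ((univ.filter (fun k : Fin m => x k = true)).card : ℤ) = (wt x : ℤ) from rfl]; linarith [show ((univ.filter (fun k : Fin m => x k = true)).card : ℤ) = (wt x : ℤ) from rfl]]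

lemma Rb_neg {m : ℕ} (x : Fin m → Bool) : Rb (fun k => ! x k) = - Rb x := by
  unfold Rb
  have he : (univ.filter (fun k : Fin m => (! x k) = true))
      = univ \ (univ.filter (fun k : Fin m => x k = true)) := by
    ext k; simp
  rw [he, card_sdiff_of_subset (filter_subset _ _), card_univ, Fintype.card_fin]
  have h := wt_le x
  push_cast [wt] at h ⊢
  omega

lemma Rpre_zero {m : ℕ} (u : Fin m → Fin m → Bool) : Rpre u 0 = 0 := by
  simp [Rpre]

lemma Rpre_succ {m : ℕ} (u : Fin m → Fin m → Bool) (j : ℕ) (hj : j < m) :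
    Rpre u (j+1) = Rpre u j + Rb (u ⟨j, hj⟩) := by
  unfold Rpre
  have he : (univ.filter (fun k : Fin m => (k:ℕ) < j+1))
      = insert ⟨j,hj⟩ (univ.filter (fun k : Fin m => (k:ℕ) < j)) := by
    ext k; simp [Fin.ext_iff]; omega
  rw [he, sum_insert (by simp)]
  ring

lemma Rpre_bound {m : ℕ} (s u : Fin m → Fin m → Bool)
    (hrec : ∀ j : Fin m, 1 ≤ (j : ℕ) →
      u j = if (Rpre u (j : ℕ) < 0 ∧ 0 ≤ Rb (s j)) ∨ (0 ≤ Rpre u (j : ℕ) ∧ Rb (s j) < 0)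
        then s j else (fun k => ! s j k)) :
    ∀ j : ℕ, j ≤ m → |Rpre u j| ≤ (m : ℤ) := by
  intro j
  induction j with
  | zero => intro _; simp [Rpre_zero]
  | succ j ih =>
    intro hj1
    have hj : j < m := by omega
    have hih := ih (by omega)
    rw [Rpre_succ u j hj]
    set jF : Fin m := ⟨j, hj⟩ with hjF
    have hb := abs_Rb_le (u jF)
    rcases Nat.eq_zero_or_pos j with h0 | h1
    · subst h0
      have h00 : Rpre u 0 = 0 := Rpre_zero u
      simpa [h00] using hb
    · have hr := hrec jF h1
      have hsign : (Rpre u j < 0 ∧ 0 ≤ Rb (u jF)) ∨ (0 ≤ Rpre u j ∧ Rb (u jF) ≤ 0) := by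
        have hcj : ((jF : Fin m) : ℕ) = j := rfl
        by_cases hc : (Rpre u (jF : ℕ) < 0 ∧ 0 ≤ Rb (s jF)) ∨ (0 ≤ Rpre u (jF : ℕ) ∧ Rb (s jF) < 0)
        · rw [if_pos hc] at hr
          rw [hcj] at hc
          rcases hc with ⟨h1, h2⟩ | ⟨h1, h2⟩
          · exact Or.inl ⟨h1, by rw [hr]; exact h2⟩
          · exact Or.inr ⟨h1, by rw [hr]; linarith⟩
        · rw [if_neg hc] at hr
          rw [hcj] at hc
          push_neg at hc
          have hRb : Rb (u jF) = - Rb (s jF) := by rw [hr]; exact Rb_neg (s jF)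
          rcases lt_or_ge (Rpre u j) 0 with hp | hp
          · exact Or.inl ⟨hp, by rw [hRb]; linarith [hc.1 hp]⟩
          · exact Or.inr ⟨hp, by rw [hRb]; linarith [hc.2 hp]⟩
      rw [abs_le] at hih hb ⊢
      rcases hsign with ⟨h1, h2⟩ | ⟨h1, h2⟩ <;> constructor <;> linarith

lemma card_lt {m q : ℕ} (hq : q ≤ m) :
    (univ.filter (fun k : Fin m => (k:ℕ) < q)).card = q := by
  have h : (univ.filter (fun k : Fin m => (k:ℕ) < q)).card = (Finset.range q).card := by
    refine Finset.card_bij (fun k _ => (k:ℕ)) ?_ ?_ ?_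
    · intro a ha; simp at ha ⊢; exact ha
    · intro a _ b _ h; exact Fin.ext h
    · intro b hb; simp at hb; exact ⟨⟨b, lt_of_lt_of_le hb hq⟩, by simp [hb], rfl⟩
  simpa using h

lemma card_lt' {m r : ℕ} :
    (univ.filter (fun k : Fin m => (k:ℕ) < r)).card = min r m := by
  have he : (univ.filter (fun k : Fin m => (k:ℕ) < r))
      = (univ.filter (fun k : Fin m => (k:ℕ) < min r m)) := by
    ext k; simp only [mem_filter, mem_univ, true_and, lt_min_iff]
    exact ⟨fun h => ⟨h, k.isLt⟩, fun h => h.1⟩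
  rw [he, card_lt (min_le_right r m)]

lemma pw_le {m : ℕ} (x : Fin m → Bool) (r : ℕ) : pw x r ≤ r := by
  calc pw x r ≤ (univ.filter (fun k : Fin m => (k:ℕ) < r)).card := by
        apply card_le_card; intro k hk; simp at hk ⊢; omega
    _ = min r m := card_lt'
    _ ≤ r := min_le_left r m

lemma pw_full {m : ℕ} (x : Fin m → Bool) : pw x m = wt x := by
  unfold pw wt
  congr 1
  apply filter_congr
  intro k _
  simp [k.isLt]

lemma card_ge {m r : ℕ} :
    (univ.filter (fun k : Fin m => ¬ (k:ℕ) < r)).card = m - min r m := by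
  have h1 := Finset.card_filter_add_card_filter_not
    (s := (univ : Finset (Fin m))) (p := fun k : Fin m => (k:ℕ) < r)
  rw [card_lt'] at h1
  simp only [card_univ, Fintype.card_fin] at h1
  omega

lemma pw_ge {m : ℕ} (x : Fin m → Bool) (r : ℕ) : wt x ≤ pw x r + (m - r) := by
  have hsum : pw x r + (univ.filter (fun k : Fin m => ¬ (k:ℕ) < r ∧ x k = true)).card
      = wt x := by
    unfold pw wt
    rw [← Finset.card_union_of_disjoint]
    · congr 1; ext k; by_cases hx : x k = true <;> simp [hx] <;> omega
    · rw [Finset.disjoint_left]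
      intro k hk1 hk2; simp at hk1 hk2; omega
  have hb : (univ.filter (fun k : Fin m => ¬ (k:ℕ) < r ∧ x k = true)).card
      ≤ (univ.filter (fun k : Fin m => ¬ (k:ℕ) < r)).card :=
    card_le_card (fun k hk => by simp at hk ⊢; tauto)
  rw [card_ge] at hb
  omega

lemma block_lt {m a b q r : ℕ} (hb : b < m) (hr : r < m) :
    a * m + b < q * m + r ↔ (a < q ∨ (a = q ∧ b < r)) := by
  constructor
  · intro h
    rcases lt_trichotomy a q with h1|h1|h1
    · exact Or.inl h1
    · subst h1; exact Or.inr ⟨rfl, by linarith⟩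
    · exfalso
      have h2 : (q+1) * m ≤ a * m := Nat.mul_le_mul_right m h1
      rw [Nat.succ_mul] at h2
      linarith
  · intro h
    rcases h with h1 | ⟨h1, h2⟩
    · have h2 : (a+1) * m ≤ q * m := Nat.mul_le_mul_right m h1
      rw [Nat.succ_mul] at h2
      linarith
    · subst h1; linarith

lemma Rpre_eq {m : ℕ} (u : Fin m → Fin m → Bool) (q : ℕ) (hq : q ≤ m) :
    Rpre u q = 2 * (∑ k ∈ univ.filter (fun k : Fin m => (k:ℕ) < q), (wt (u k) : ℤ))
      - (q : ℤ) * m := by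
  unfold Rpre Rb
  rw [Finset.sum_sub_distrib, Finset.sum_const, card_lt hq, ← Finset.mul_sum]
  push_cast
  unfold wt
  push_cast
  ring

lemma card_split {m : ℕ} (u : Fin m → Fin m → Bool) {q r : ℕ} (hq : q < m) (hr : r < m) :
    ((univ.filter (fun p : Fin m × Fin m =>
        (p.1:ℕ) * m + (p.2:ℕ) < q * m + r ∧ u p.1 p.2 = true)).card
      = (∑ k ∈ univ.filter (fun k : Fin m => (k:ℕ) < q), wt (u k)) + pw (u ⟨q, hq⟩) r) := by
  have h1 : ((univ.filter (fun p : Fin m × Fin m =>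
        (p.1:ℕ) * m + (p.2:ℕ) < q * m + r ∧ u p.1 p.2 = true)).card
      = ∑ a : Fin m, (univ.filter (fun b : Fin m =>
          (a:ℕ) * m + (b:ℕ) < q * m + r ∧ u a b = true)).card) := by
    rw [Finset.card_filter, Fintype.sum_prod_type]
    exact Finset.sum_congr rfl (fun a _ => (Finset.card_filter _ _).symm)
  rw [h1, ← Finset.sum_filter_add_sum_filter_not univ (fun a : Fin m => (a:ℕ) < q)]
  congr 1
  · apply Finset.sum_congr rfl
    intro a ha
    simp only [mem_filter, mem_univ, true_and] at ha
    unfold wt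
    congr 1
    apply filter_congr
    intro b _
    have : (a:ℕ) * m + (b:ℕ) < q * m + r := (block_lt b.isLt hr).mpr (Or.inl ha)
    simp [this]
  · rw [Finset.sum_eq_single_of_mem (⟨q, hq⟩ : Fin m)]
    · unfold pw
      congr 1
      apply filter_congr
      intro b _
      rw [block_lt b.isLt hr]
      simp
    · simp
    · intro a ha hne
      simp only [mem_filter, mem_univ, true_and, not_lt] at ha
      have haq : q < (a:ℕ) := lt_of_le_of_ne ha (fun h => hne (Fin.ext h.symm))
      rw [Finset.card_eq_zero]
      rw [Finset.filter_eq_empty_iff]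
      intro b _
      rw [block_lt b.isLt hr]
      rintro ⟨h | ⟨h, -⟩, -⟩ <;> omega

lemma RdsFlat_eq {m : ℕ} (u : Fin m → Fin m → Bool) {q r : ℕ} (hq : q < m) (hr : r < m) :
    RdsFlat u (q * m + r) = Rpre u q + (2 * (pw (u ⟨q, hq⟩) r : ℤ) - r) := by
  unfold RdsFlat
  rw [card_split u hq hr, Rpre_eq u q (le_of_lt hq)]
  push_cast
  ring

lemma RdsFlat_full {m : ℕ} (u : Fin m → Fin m → Bool) :
    RdsFlat u (m * m) = Rpre u m := by
  unfold RdsFlat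
  have h1 : ((univ.filter (fun p : Fin m × Fin m =>
        (p.1:ℕ) * m + (p.2:ℕ) < m * m ∧ u p.1 p.2 = true)).card
      = ∑ a : Fin m, wt (u a)) := by
    rw [Finset.card_filter, Fintype.sum_prod_type]
    apply Finset.sum_congr rfl
    intro a _
    rw [← Finset.card_filter]
    unfold wt
    congr 1
    apply filter_congr
    intro b _
    have hlt : (a:ℕ) * m + (b:ℕ) < m * m := by
      have h2 : ((a:ℕ)+1) * m ≤ m * m := Nat.mul_le_mul_right m a.isLt
      rw [Nat.succ_mul] at h2
      have := b.isLt
      linarith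
    simp [hlt]
  rw [h1, Rpre_eq u m le_rfl]
  have h2 : (univ.filter (fun k : Fin m => (k:ℕ) < m)) = univ := by
    ext k; simp [k.isLt]
  rw [h2]
  push_cast
  ring

lemma pw_le_wt {m : ℕ} (x : Fin m → Bool) (r : ℕ) : pw x r ≤ wt x :=
  card_le_card (fun k hk => by simp at hk ⊢; exact hk.2)


/-- under the block-balancing rule, `|R(u)_i| ≤ (3/2)·√n` for all `i ∈ [n]`,
stated as `2·|R(u)_i| ≤ 3·m` with `m = √n`. -/
theorem stmt7 (m : ℕ) (hm : Even m) (hpos : 0 < m) (s u : Fin m → Fin m → Bool)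
    (h0 : u ⟨0, hpos⟩ = s ⟨0, hpos⟩)
    (hrec : ∀ j : Fin m, 1 ≤ (j : ℕ) →
      u j = if (Rpre u (j : ℕ) < 0 ∧ 0 ≤ Rb (s j)) ∨ (0 ≤ Rpre u (j : ℕ) ∧ Rb (s j) < 0)
        then s j else (fun k => ! s j k)) :
    ∀ i : ℕ, i ≤ m * m → 2 * |RdsFlat u i| ≤ 3 * (m : ℤ) := by
  intro i hi
  have hbound := Rpre_bound s u hrec
  have hm0 : (0:ℤ) ≤ (m:ℤ) := by positivity
  rcases eq_or_lt_of_le hi with heq | hlt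
  · rw [heq, RdsFlat_full]
    have h := hbound m le_rfl
    rw [abs_le] at h
    rcases abs_cases (Rpre u m) with ⟨he, _⟩ | ⟨he, _⟩ <;> rw [he] <;> linarith [h.1, h.2]
  · set q := i / m with hqdef
    set r := i % m with hrdef
    have hr : r < m := Nat.mod_lt _ hpos
    have hq : q < m := by
      rw [hqdef, Nat.div_lt_iff_lt_mul hpos]
      exact hlt
    have hi_eq : i = q * m + r := by rw [mul_comm]; exact (Nat.div_add_mod i m).symm
    rw [hi_eq, RdsFlat_eq u hq hr]
    set qF : Fin m := ⟨q, hq⟩ with hqF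
    have hA := hbound q (le_of_lt hq)
    have hB := hbound (q+1) hq
    rw [Rpre_succ u q hq] at hB
    have hRb : Rb (u qF) = 2 * (wt (u qF) : ℤ) - m := rfl
    rw [hRb] at hB
    have h1 : (pw (u qF) r : ℤ) ≤ r := by exact_mod_cast pw_le (u qF) r
    have h2 := pw_ge (u qF) r
    zify [le_of_lt hr] at h2
    have h3 : (pw (u qF) r : ℤ) ≤ (wt (u qF) : ℤ) := by exact_mod_cast pw_le_wt (u qF) r
    have h4 : (0:ℤ) ≤ (pw (u qF) r : ℤ) := by positivity
    rw [abs_le] at hA hB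
    rcases abs_cases (Rpre u q + (2 * (pw (u qF) r : ℤ) - r)) with ⟨he, _⟩ | ⟨he, _⟩ <;>
      rw [he] <;> linarith [hA.1, hA.2, hB.1, hB.2]
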